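/- Let G be a finite simple connected graph that is claw-free, has independence number α(G) = 3, and contains no induced cycle C₇ on seven vertices. Then for every non-simplicial vertex v of G there exists a connected dominating set D of G with v ∈ D and |D| ≤ 4. -/

import Mathlib

/-- A set of vertices is independent if its vertices are pairwise nonadjacent. -/
def SimpleGraph.IsIndepSet' {V : Type*} (G : SimpleGraph V) (s : Finset V) : Prop :=
  ∀ a ∈ s, ∀ b ∈ s, a ≠ b → ¬ G.Adj a b

/-- The independence number of `G`: the largest cardinality of an independent set. -/
noncomputable def SimpleGraph.indepNum' {V : Type*} (G : SimpleGraph V) : ℕ :=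
  sSup {n | ∃ s : Finset V, G.IsIndepSet' s ∧ s.card = n}

/-- `G` contains an induced (chordless) cycle on `n` vertices. -/
def SimpleGraph.HasInducedCycle {V : Type*} (G : SimpleGraph V) (n : ℕ) : Prop :=
  ∃ f : ZMod n → V, Function.Injective f ∧
    ∀ i j : ZMod n, G.Adj (f i) (f j) ↔ (j = i + 1 ∨ i = j + 1)

/-- A vertex is simplicial if its neighbourhood induces a complete subgraph. -/
def SimpleGraph.IsSimplicial {V : Type*} (G : SimpleGraph V) (v : V) : Prop :=
  ∀ a ∈ G.neighborSet v, ∀ b ∈ G.neighborSet v, a ≠ b → G.Adj a b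

/-- A graph is claw-free if no vertex has three pairwise nonadjacent neighbors. -/
def SimpleGraph.ClawFree {V : Type*} (G : SimpleGraph V) : Prop :=
  ¬ ∃ c x y z : V, x ≠ y ∧ x ≠ z ∧ y ≠ z ∧
    G.Adj c x ∧ G.Adj c y ∧ G.Adj c z ∧ ¬ G.Adj x y ∧ ¬ G.Adj x z ∧ ¬ G.Adj y z

/-!
Let `a`, `b` be nonadjacent neighbours of `v` and call a vertex *far* if it is not dominated by
`{v, a, b}`. Since `α(G) = 3`, the vertices that see neither end of a non-edge form a clique; in
particular the far vertices do. If there is no far vertex, `{v, a, b}` works. Otherwise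
connectivity gives a far vertex `u` with a neighbour `w` adjacent to `v`, `a` or `b`. If `w` sees
only `v` it sees every far vertex and `{v, a, b, w}` works. If `w ~ a`, one tries the path
`v a w u` (or `b v w u` when `w ~ v`, claw-freeness then forcing `w ≁ b`); a vertex `z` it misses
sees `b` (resp. `a`) but no vertex of the path. Either `z` sees a far vertex `u'`, and one
repeats with `z` (a vertex `y` missed by `v b z u'` closes the induced `C₇` `v a y u u' z b` or
the independent set `{y, z, u, v}`), or `{v, a, b, w}` works, or `{z, w, u', v or b}` is an
independent set for a far `u'` missed by `w`.
-/

theorem ZMod.seven_cases (i : ZMod 7) :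
    i = 0 ∨ i = 1 ∨ i = 2 ∨ i = 3 ∨ i = 4 ∨ i = 5 ∨ i = 6 := by
  revert i
  decide

namespace SimpleGraph

variable {V : Type*} {G : SimpleGraph V}

def Dominates (G : SimpleGraph V) (D : Finset V) (u : V) : Prop :=
  u ∈ D ∨ ∃ d ∈ D, G.Adj u d

def IsConnectedDominating (G : SimpleGraph V) (D : Finset V) : Prop :=
  (G.induce (D : Set V)).Connected ∧ ∀ u, G.Dominates D u

theorem Dominates.mono {D D' : Finset V} {u : V} (h : G.Dominates D u) (hDD' : D ⊆ D') :
    G.Dominates D' u := by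
  rcases h with h | ⟨d, hd, hud⟩
  · exact .inl (hDD' h)
  · exact .inr ⟨d, hDD' hd, hud⟩

theorem dominates_insert [DecidableEq V] {D : Finset V} {x u : V} :
    G.Dominates (insert x D) u ↔ u = x ∨ G.Adj u x ∨ G.Dominates D u := by
  simp only [Dominates, Finset.mem_insert, exists_eq_or_imp]
  tauto

theorem dominates_singleton {x u : V} : G.Dominates {x} u ↔ u = x ∨ G.Adj u x := by
  simp [Dominates]

theorem ne_of_not_dominates {D : Finset V} {u d : V} (hu : ¬G.Dominates D u) (hd : d ∈ D) :
    d ≠ u :=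
  fun hdu => hu (.inl (hdu ▸ hd))

theorem not_adj_of_not_dominates {D : Finset V} {u d : V} (hu : ¬G.Dominates D u)
    (hd : d ∈ D) : ¬G.Adj d u :=
  fun hdu => hu (.inr ⟨d, hd, hdu.symm⟩)

theorem card_le_indepNum' [Fintype V] {s : Finset V} (hs : G.IsIndepSet' s) :
    s.card ≤ G.indepNum' :=
  le_csSup ⟨Fintype.card V, by rintro _ ⟨t, -, rfl⟩; exact t.card_le_univ⟩ ⟨s, hs, rfl⟩

theorem isClique_setOf_not_dominates_pair [Fintype V] [DecidableEq V]
    (hα : G.indepNum' ≤ 3) {a b : V} (hab : a ≠ b) (hnab : ¬G.Adj a b) :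
    G.IsClique {x | ¬G.Dominates {a, b} x} := by
  intro x hx y hy hxy
  by_contra hnxy
  simp only [Set.mem_ofPred_eq, Dominates, Finset.mem_insert, Finset.mem_singleton,
    exists_eq_or_imp, exists_eq_left, not_or] at hx hy
  have hindep : G.IsIndepSet' {x, y, a, b} := by
    simp only [IsIndepSet', Finset.mem_insert, Finset.mem_singleton]
    rintro p (rfl | rfl | rfl | rfl) q (rfl | rfl | rfl | rfl) hpq <;>
      simp_all [G.adj_comm]
  have hcard := card_le_indepNum' hindep
  rw [Finset.card_insert_of_notMem, Finset.card_insert_of_notMem, Finset.card_pair hab] at hcard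
  · omega
  · simp_all
  · simp_all

theorem connected_induce_singleton (x : V) : (G.induce ({x} : Finset V)).Connected := by
  rw [Finset.coe_singleton]
  have : Nonempty ({x} : Set V) := ⟨⟨x, rfl⟩⟩
  exact ⟨Preconnected.of_subsingleton⟩

theorem connected_induce_insert [DecidableEq V] {D : Finset V} {x : V}
    (hD : (G.induce (D : Set V)).Connected) (hx : ∃ d ∈ D, G.Adj x d) :
    (G.induce (insert x D : Finset V)).Connected := by
  obtain ⟨d, hd, hxd⟩ := hx
  have hxD : ((insert x D : Finset V) : Set V) = ({x, d} : Set V) ∪ (D : Set V) := by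
    ext
    simp only [Finset.coe_insert, Set.mem_insert_iff, Set.mem_union, Set.mem_singleton_iff]
    grind
  rw [hxD]
  exact induce_union_connected (induce_pair_connected_of_adj hxd).preconnected hD.preconnected
    ⟨d, by simp, hd⟩

theorem connected_induce_path4 [DecidableEq V] {x₁ x₂ x₃ x₄ : V} (h₁ : G.Adj x₁ x₂)
    (h₂ : G.Adj x₂ x₃) (h₃ : G.Adj x₃ x₄) :
    (G.induce ({x₁, x₂, x₃, x₄} : Finset V)).Connected :=
  connected_induce_insert (connected_induce_insert (connected_induce_insert
    (connected_induce_singleton x₄) ⟨x₄, by simp, h₃⟩) ⟨x₃, by simp, h₂⟩) ⟨x₂, by simp, h₁⟩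

theorem isConnectedDominating_insert [DecidableEq V] {D : Finset V} {w : V}
    (hD : (G.induce (D : Set V)).Connected) (hw : ∃ d ∈ D, G.Adj w d)
    (hdom : ∀ u, ¬G.Dominates D u → G.Adj u w) : G.IsConnectedDominating (insert w D) := by
  refine ⟨connected_induce_insert hD hw, fun u => ?_⟩
  by_cases hu : G.Dominates D u
  · exact hu.mono (Finset.subset_insert w D)
  · exact .inr ⟨w, Finset.mem_insert_self w D, hdom u hu⟩

theorem hasInducedCycle_seven_of_adj_iff {f : ZMod 7 → V}
    (hf : ∀ i j, G.Adj (f i) (f j) ↔ (j = i + 1 ∨ i = j + 1)) : G.HasInducedCycle 7 := by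
  refine ⟨f, fun i j hij => ?_, hf⟩
  -- a vertex of `C₇` is determined by its two neighbours
  have hnbr : ∀ k, (k = i + 1 ∨ i = k + 1) ↔ (k = j + 1 ∨ j = k + 1) := fun k => by
    rw [← hf, ← hf, hij]
  revert hnbr
  rcases ZMod.seven_cases i with rfl | rfl | rfl | rfl | rfl | rfl | rfl <;>
    rcases ZMod.seven_cases j with rfl | rfl | rfl | rfl | rfl | rfl | rfl <;> decide

theorem hasInducedCycle_seven {v₀ v₁ v₂ v₃ v₄ v₅ v₆ : V}
    (h₀₁ : G.Adj v₀ v₁) (h₁₂ : G.Adj v₁ v₂) (h₂₃ : G.Adj v₂ v₃) (h₃₄ : G.Adj v₃ v₄)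
    (h₄₅ : G.Adj v₄ v₅) (h₅₆ : G.Adj v₅ v₆) (h₆₀ : G.Adj v₆ v₀)
    (n₀₂ : ¬G.Adj v₀ v₂) (n₀₃ : ¬G.Adj v₀ v₃) (n₀₄ : ¬G.Adj v₀ v₄) (n₀₅ : ¬G.Adj v₀ v₅)
    (n₁₃ : ¬G.Adj v₁ v₃) (n₁₄ : ¬G.Adj v₁ v₄) (n₁₅ : ¬G.Adj v₁ v₅) (n₁₆ : ¬G.Adj v₁ v₆)
    (n₂₄ : ¬G.Adj v₂ v₄) (n₂₅ : ¬G.Adj v₂ v₅) (n₂₆ : ¬G.Adj v₂ v₆) (n₃₅ : ¬G.Adj v₃ v₅)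
    (n₃₆ : ¬G.Adj v₃ v₆) (n₄₆ : ¬G.Adj v₄ v₆) : G.HasInducedCycle 7 := by
  refine hasInducedCycle_seven_of_adj_iff (f := ![v₀, v₁, v₂, v₃, v₄, v₅, v₆]) fun i j => ?_
  rcases ZMod.seven_cases i with rfl | rfl | rfl | rfl | rfl | rfl | rfl <;>
    rcases ZMod.seven_cases j with rfl | rfl | rfl | rfl | rfl | rfl | rfl <;>
    simp_all [G.adj_comm] <;> decide

structure IsInducedCherry (G : SimpleGraph V) (v a b : V) : Prop where
  adj_left : G.Adj v a
  adj_right : G.Adj v b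
  ne : a ≠ b
  not_adj : ¬G.Adj a b

/-! In the names below, a vertex is *far* if it is not dominated by `{v, a, b}`. -/

namespace IsInducedCherry

variable {v a b : V}

theorem symm (h : G.IsInducedCherry v a b) : G.IsInducedCherry v b a :=
  ⟨h.adj_right, h.adj_left, h.ne.symm, fun hba => h.not_adj hba.symm⟩

variable [DecidableEq V]

theorem connected_induce (h : G.IsInducedCherry v a b) :
    (G.induce ({v, a, b} : Finset V)).Connected := by
  rw [Finset.insert_comm]
  exact connected_induce_insert
    (connected_induce_insert (connected_induce_singleton b) ⟨b, by simp, h.adj_right⟩)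
    ⟨v, by simp, h.adj_left.symm⟩

theorem adj_right_of_dominates (h : G.IsInducedCherry v a b) {z : V}
    (hz : G.Dominates {v, a, b} z) (hnzv : ¬G.Adj z v) (hza : z ≠ a) (hnza : ¬G.Adj z a) :
    G.Adj z b := by
  simp only [dominates_insert, dominates_singleton] at hz
  rcases hz with rfl | hzv | rfl | hza' | rfl | hzb
  · exact absurd h.adj_left hnza
  · exact absurd hzv hnzv
  · exact absurd rfl hza
  · exact absurd hza' hnza
  · exact absurd h.adj_right.symm hnzv
  · exact hzb

theorem exists_isConnectedDominating_of_forall_far_adj (h : G.IsInducedCherry v a b) {w : V}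
    (hw : ∃ d ∈ ({v, a, b} : Finset V), G.Adj w d)
    (hfar : ∀ u, ¬G.Dominates {v, a, b} u → G.Adj u w) :
    ∃ D : Finset V, v ∈ D ∧ D.card ≤ 4 ∧ G.IsConnectedDominating D :=
  ⟨insert w {v, a, b}, by simp, Finset.card_le_four,
    isConnectedDominating_insert h.connected_induce hw hfar⟩

variable [Fintype V]

theorem isClique_far (hα : G.indepNum' ≤ 3) (h : G.IsInducedCherry v a b) :
    G.IsClique {x | ¬G.Dominates {v, a, b} x} :=
  (isClique_setOf_not_dominates_pair hα h.ne h.not_adj).subset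
    fun _ hx hx' => hx (Dominates.mono hx' (Finset.subset_insert v {a, b}))

theorem dominates_of_not_adj_far (hα : G.indepNum' ≤ 3) (h : G.IsInducedCherry v a b)
    {u z : V} (hu : ¬G.Dominates {v, a, b} u) (hzu : z ≠ u) (hnzu : ¬G.Adj z u) :
    G.Dominates {v, a, b} z := by
  by_contra hz
  exact hnzu (h.isClique_far hα hz hu hzu)

theorem exists_isConnectedDominating_of_forall_far_not_adj (hα : G.indepNum' ≤ 3)
    (h : G.IsInducedCherry v a b) {w z s : V} (hw : ∃ d ∈ ({v, a, b} : Finset V), G.Adj w d)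
    (hz : G.Dominates {v, a, b} z) (hzfar : ∀ u, ¬G.Dominates {v, a, b} u → ¬G.Adj z u)
    (hs : s ∈ ({v, a, b} : Finset V)) (hzsw : ¬G.Dominates {s, w} z)
    (hws : ¬G.Dominates {s} w) :
    ∃ D : Finset V, v ∈ D ∧ D.card ≤ 4 ∧ G.IsConnectedDominating D := by
  by_cases hfar : ∀ u, ¬G.Dominates {v, a, b} u → G.Adj u w
  · exact h.exists_isConnectedDominating_of_forall_far_adj hw hfar
  -- a far `u` missed by `w` makes `{z, w, u, s}` independent
  push Not at hfar
  obtain ⟨u, hu, huw⟩ := hfar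
  obtain ⟨d, hd, hwd⟩ := hw
  have hzu : z ≠ u := fun hzu => hu (hzu ▸ hz)
  have hwu : w ≠ u := fun hwu => hu (.inr ⟨d, hd, hwu ▸ hwd⟩)
  simp only [dominates_insert, dominates_singleton, not_or] at hzsw hws
  have hz' : ¬G.Dominates {u, s} z := by
    simp [dominates_insert, dominates_singleton, hzfar u hu, *]
  have hw' : ¬G.Dominates {u, s} w := by
    simp [dominates_insert, dominates_singleton, G.adj_comm w u, *]
  exact (hzsw.2.2.2 (isClique_setOf_not_dominates_pair hα (ne_of_not_dominates hu hs).symm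
    (fun hus => not_adj_of_not_dominates hu hs hus.symm) hz' hw' hzsw.2.2.1)).elim

theorem exists_isConnectedDominating_of_adj_right_far (hα : G.indepNum' ≤ 3)
    (hC7 : ¬G.HasInducedCycle 7) (h : G.IsInducedCherry v a b) {u u' z : V}
    (hu : ¬G.Dominates {v, a, b} u) (hu' : ¬G.Dominates {v, a, b} u') (hzb : G.Adj z b)
    (hzu' : G.Adj z u') (hnzv : ¬G.Adj z v) (hnza : ¬G.Adj z a) (hnzu : ¬G.Adj z u) :
    ∃ D : Finset V, v ∈ D ∧ D.card ≤ 4 ∧ G.IsConnectedDominating D := by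
  by_cases hD : ∀ x, G.Dominates {v, b, z, u'} x
  · exact ⟨_, by simp, Finset.card_le_four,
      connected_induce_path4 h.adj_right hzb.symm hzu', hD⟩
  push Not at hD
  obtain ⟨y, hy⟩ := hD
  simp only [dominates_insert, dominates_singleton, not_or] at hy
  obtain ⟨hyv, hnyv, hyb, hnyb, hyz, hnyz, hyu', hnyu'⟩ := hy
  have hyU : G.Dominates {v, a, b} y := h.dominates_of_not_adj_far hα hu' hyu' hnyu'
  have hya : G.Adj y a :=
    h.symm.adj_right_of_dominates (by rwa [Finset.pair_comm]) hnyv hyb hnyb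
  by_cases hnyu : G.Adj y u
  · have huu' : G.Adj u u' := h.isClique_far hα hu hu' fun huu' => hnzu (huu' ▸ hzu')
    exact (hC7 (hasInducedCycle_seven h.adj_left hya.symm hnyu huu' hzu'.symm hzb
      h.adj_right.symm (fun hvy => hnyv hvy.symm) (not_adj_of_not_dominates hu (by simp))
      (not_adj_of_not_dominates hu' (by simp)) (fun hvz => hnzv hvz.symm)
      (not_adj_of_not_dominates hu (by simp)) (not_adj_of_not_dominates hu' (by simp))
      (fun haz => hnza haz.symm) h.not_adj hnyu' hnyz hnyb (fun huz => hnzu huz.symm)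
      (fun hub => not_adj_of_not_dominates hu (by simp) hub.symm)
      (fun hub => not_adj_of_not_dominates hu' (by simp) hub.symm))).elim
  -- otherwise `{y, z, u, v}` is independent
  have hyu : y ≠ u := fun hyu => hu (hyu ▸ hyU)
  have hzu : z ≠ u := fun hzu => not_adj_of_not_dominates hu (by simp) (hzu ▸ hzb).symm
  have hzv : z ≠ v := fun hzv => not_adj_of_not_dominates hu' (by simp) (hzv ▸ hzu')
  exact (hnyz (isClique_setOf_not_dominates_pair hα (a := u) (b := v)
    (ne_of_not_dominates hu (by simp)).symm
    (fun huv => not_adj_of_not_dominates hu (by simp) huv.symm)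
    (by simp [dominates_insert, dominates_singleton, *])
    (by simp [dominates_insert, dominates_singleton, *]) hyz)).elim

theorem exists_isConnectedDominating_of_adj_left_far_of_not_adj (hα : G.indepNum' ≤ 3)
    (hC7 : ¬G.HasInducedCycle 7) (h : G.IsInducedCherry v a b) {w u : V}
    (hu : ¬G.Dominates {v, a, b} u) (hwa : G.Adj w a) (hwu : G.Adj w u) (hnwv : ¬G.Adj w v) :
    ∃ D : Finset V, v ∈ D ∧ D.card ≤ 4 ∧ G.IsConnectedDominating D := by
  by_cases hD : ∀ x, G.Dominates {v, a, w, u} x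
  · exact ⟨_, by simp, Finset.card_le_four,
      connected_induce_path4 h.adj_left hwa.symm hwu, hD⟩
  push Not at hD
  obtain ⟨z, hz⟩ := hD
  simp only [dominates_insert, dominates_singleton, not_or] at hz
  obtain ⟨hzv, hnzv, hza, hnza, hzw, hnzw, hzu, hnzu⟩ := hz
  have hzU : G.Dominates {v, a, b} z := h.dominates_of_not_adj_far hα hu hzu hnzu
  have hzb : G.Adj z b := h.adj_right_of_dominates hzU hnzv hza hnza
  by_cases hzfar : ∃ u', ¬G.Dominates {v, a, b} u' ∧ G.Adj z u'
  · obtain ⟨u', hu', hzu'⟩ := hzfar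
    exact h.exists_isConnectedDominating_of_adj_right_far hα hC7 hu hu' hzb hzu' hnzv hnza hnzu
  push Not at hzfar
  have hwv : w ≠ v := fun hwv => not_adj_of_not_dominates hu (by simp) (hwv ▸ hwu)
  exact h.exists_isConnectedDominating_of_forall_far_not_adj hα ⟨a, by simp, hwa⟩ hzU hzfar
    (s := v) (by simp) (by simp [dominates_insert, dominates_singleton, *])
    (by simp [dominates_singleton, *])

theorem exists_isConnectedDominating_of_adj_left_far (hα : G.indepNum' ≤ 3)
    (hC7 : ¬G.HasInducedCycle 7) (hcf : G.ClawFree) (h : G.IsInducedCherry v a b) {w u : V}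
    (hu : ¬G.Dominates {v, a, b} u) (hwa : G.Adj w a) (hwu : G.Adj w u) :
    ∃ D : Finset V, v ∈ D ∧ D.card ≤ 4 ∧ G.IsConnectedDominating D := by
  by_cases hwv : G.Adj w v
  swap
  · exact h.exists_isConnectedDominating_of_adj_left_far_of_not_adj hα hC7 hu hwa hwu hwv
  have hau : ¬G.Adj a u := not_adj_of_not_dominates hu (by simp)
  have hbu : ¬G.Adj b u := not_adj_of_not_dominates hu (by simp)
  have hnwb : ¬G.Adj w b := fun hwb => hcf ⟨w, a, b, u, h.ne,
    ne_of_not_dominates hu (by simp), ne_of_not_dominates hu (by simp), hwa, hwb, hwu,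
    h.not_adj, hau, hbu⟩
  by_cases hD : ∀ x, G.Dominates {b, v, w, u} x
  · exact ⟨_, by simp, Finset.card_le_four,
      connected_induce_path4 h.adj_right.symm hwv.symm hwu, hD⟩
  push Not at hD
  obtain ⟨z, hz⟩ := hD
  simp only [dominates_insert, dominates_singleton, not_or] at hz
  obtain ⟨hzb, hnzb, hzv, hnzv, hzw, hnzw, hzu, hnzu⟩ := hz
  have hzU : G.Dominates {v, a, b} z := h.dominates_of_not_adj_far hα hu hzu hnzu
  have hza : G.Adj z a :=
    h.symm.adj_right_of_dominates (by rwa [Finset.pair_comm]) hnzv hzb hnzb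
  by_cases hzfar : ∃ u', ¬G.Dominates {v, a, b} u' ∧ G.Adj z u'
  · obtain ⟨u', hu', hzu'⟩ := hzfar
    exact h.exists_isConnectedDominating_of_adj_left_far_of_not_adj hα hC7 hu' hza hzu' hnzv
  push Not at hzfar
  have hwb : w ≠ b := fun hwb => hbu (hwb ▸ hwu)
  exact h.exists_isConnectedDominating_of_forall_far_not_adj hα ⟨a, by simp, hwa⟩ hzU hzfar
    (s := b) (by simp) (by simp [dominates_insert, dominates_singleton, *])
    (by simp [dominates_singleton, *])

theorem exists_isConnectedDominating_of_far (hα : G.indepNum' ≤ 3)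
    (hC7 : ¬G.HasInducedCycle 7) (hcf : G.ClawFree) (hG : G.Connected)
    (h : G.IsInducedCherry v a b) {c : V} (hc : ¬G.Dominates {v, a, b} c) :
    ∃ D : Finset V, v ∈ D ∧ D.card ≤ 4 ∧ G.IsConnectedDominating D := by
  obtain ⟨⟨⟨u, d⟩, hud⟩, -, hu, hd⟩ := (hG.preconnected c v).some.exists_boundary_dart
    {x | ¬G.Dominates {v, a, b} x} hc (by simp [Dominates])
  simp only [Set.mem_ofPred_eq, not_not] at hu hd
  by_cases hda : G.Adj d a
  · exact h.exists_isConnectedDominating_of_adj_left_far hα hC7 hcf hu hda hud.symm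
  by_cases hdb : G.Adj d b
  · exact h.symm.exists_isConnectedDominating_of_adj_left_far hα hC7 hcf
      (by rwa [Finset.pair_comm]) hdb hud.symm
  have hdD : d ∉ ({v, a, b} : Finset V) := fun hdD => hu (.inr ⟨d, hdD, hud⟩)
  simp only [Finset.mem_insert, Finset.mem_singleton, not_or] at hdD
  obtain ⟨hdv', hda', hdb'⟩ := hdD
  have hdv : G.Adj d v := by
    simpa [dominates_insert, dominates_singleton, hdv', hda', hdb', hda, hdb] using hd
  refine h.exists_isConnectedDominating_of_forall_far_adj ⟨v, by simp, hdv⟩ fun u' hu' => ?_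
  exact isClique_setOf_not_dominates_pair hα h.ne h.not_adj
    (fun hu'' => hu' (hu''.mono (Finset.subset_insert v {a, b})))
    (by simp [dominates_insert, dominates_singleton, *]) fun hu'd => hu' (hu'd ▸ hd)

end IsInducedCherry

end SimpleGraph

/-- **Theorem 2.** If `G` is a finite simple connected claw-free graph with independence
number 3 and no induced `C₇`, then every non-simplicial vertex `v` belongs to a connected
dominating set of at most 4 vertices. -/
theorem stmt_2 {V : Type*} [Fintype V] (G : SimpleGraph V)
    (hconn : G.Connected) (hcf : G.ClawFree)
    (hα : G.indepNum' = 3) (hC7 : ¬ G.HasInducedCycle 7)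
    (v : V) (hv : ¬ G.IsSimplicial v) :
    ∃ D : Finset V, v ∈ D ∧ D.card ≤ 4 ∧
      (G.induce (D : Set V)).Connected ∧
      (∀ u : V, u ∈ D ∨ ∃ d ∈ D, G.Adj u d) := by
  classical
  obtain ⟨a, ha, b, hb, hab, hnab⟩ : ∃ a ∈ G.neighborSet v, ∃ b ∈ G.neighborSet v,
      a ≠ b ∧ ¬G.Adj a b := by
    simpa [SimpleGraph.IsSimplicial] using hv
  have h : G.IsInducedCherry v a b := ⟨ha, hb, hab, hnab⟩
  by_cases hdom : ∀ u, G.Dominates {v, a, b} u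
  · exact ⟨{v, a, b}, by simp, Finset.card_le_three.trans (by norm_num), h.connected_induce,
      hdom⟩
  push Not at hdom
  obtain ⟨c, hc⟩ := hdom
  exact h.exists_isConnectedDominating_of_far hα.le hC7 hcf hconn hc
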